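/- Let w ∈ S_n. Call z ∈ c(Λ_w) join-irreducible if z is not the all-zero tuple and whenever z = x ∨ y (coordinatewise max) with x, y ∈ c(Λ_w), then z = x or z = y. Then the set of join-irreducible elements of c(Λ_w) is exactly M_w = {b_{i,x}(w) : 1 ≤ i ≤ n, 1 ≤ x ≤ c_i(w)}. -/

import Mathlib

/-- The inversion set of `w`: pairs of positions `(i,j)` with `i < j` and `w i > w j`. -/
def Invs {n : ℕ} (w : Equiv.Perm (Fin n)) : Finset (Fin n × Fin n) :=
  Finset.univ.filter (fun p => p.1 < p.2 ∧ w p.2 < w p.1)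

/-- The length (number of inversions) of `w`. -/
def len {n : ℕ} (w : Equiv.Perm (Fin n)) : ℕ := (Invs w).card

/-- The `i`-th entry of the Lehmer code of `w`. -/
def lehmer {n : ℕ} (w : Equiv.Perm (Fin n)) (i : Fin n) : ℕ :=
  ((Invs w).filter (fun p => p.1 = i)).card

/-- The extended Lehmer code `m_{i,j}(w)`: the number of inversions `(i,k)` with `k < j`. -/
def mext {n : ℕ} (w : Equiv.Perm (Fin n)) (i : Fin n) (j : Fin (n + 1)) : ℕ :=
  ((Invs w).filter (fun p => p.1 = i ∧ (p.2 : ℕ) < (j : ℕ))).card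

/-- The left weak order: `v ≤_L w` iff `inv(v) ⊆ inv(w)`. -/
def leftWeak {n : ℕ} (v w : Equiv.Perm (Fin n)) : Prop := Invs v ⊆ Invs w

/-- The value of `w` extended to `Fin (n+1)` by fixing the last point
(the `1`-indexed convention `w(n+1) = n+1` becomes `wval w n = n` here). -/
def wval {n : ℕ} (w : Equiv.Perm (Fin n)) (j : Fin (n + 1)) : ℕ :=
  if h : (j : ℕ) < n then (w ⟨j, h⟩ : ℕ) else n

/-- The set of non-inversions of `w`: pairs `(i,j)` with `i ≤ j ≤ n+1` and `w i ≤ w j`,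
where `w` is extended by fixing the last point. -/
def Ninvs {n : ℕ} (w : Equiv.Perm (Fin n)) : Finset (Fin n × Fin (n + 1)) :=
  Finset.univ.filter (fun p => (p.1 : ℕ) ≤ (p.2 : ℕ) ∧ (w p.1 : ℕ) ≤ wval w p.2)

/-- The set of Lehmer codes of elements of the weak order interval `Λ_w = [id, w]`. -/
def codeSet {n : ℕ} (w : Equiv.Perm (Fin n)) : Set (Fin n → ℕ) :=
  {x | ∃ v : Equiv.Perm (Fin n), leftWeak v w ∧ lehmer v = x}

/-- The tuple `b_{i,x}(w)`: the `j`-th coordinate is `0` if `j < i` or `(i,j) ∈ inv(w)`,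
and is `max {0, x - m_{i,j}(w)}` (truncated subtraction) if `j ≥ i` and `(i,j) ∈ ninv(w)`. -/
def bmin {n : ℕ} (w : Equiv.Perm (Fin n)) (i : Fin n) (x : ℕ) : Fin n → ℕ :=
  fun j => if (i : ℕ) ≤ (j : ℕ) ∧ (w i : ℕ) ≤ (w j : ℕ) then x - mext w i j.castSucc else 0

/-- The set `M_w` of all `b_{i,x}(w)` for `1 ≤ x ≤ c_i(w)`. -/
def Mset {n : ℕ} (w : Equiv.Perm (Fin n)) : Set (Fin n → ℕ) :=
  {z | ∃ (i : Fin n) (x : ℕ), 1 ≤ x ∧ x ≤ lehmer w i ∧ z = bmin w i x}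

/-- The direct sum `v × w ∈ S_{m+n}` of permutations. -/
def dsum {m n : ℕ} (v : Equiv.Perm (Fin m)) (w : Equiv.Perm (Fin n)) :
    Equiv.Perm (Fin (m + n)) :=
  finSumFinEquiv.permCongr (Equiv.sumCongr v w)

/-!
If `v ≤_L w` and `(i, j)` is a non-inversion of `w` with `i < j`, every inversion `(i, d)` of `v`
is either an inversion of `w` with `d < j` or gives the inversion `(j, d)` of `v`; hence
`c_i(v) ≤ c_j(v) + m_{i,j}(w)`, and `b_{i,x}(w)` lies below every code in `c(Λ_w)` whose `i`-th
entry is at least `x`. Being itself such a code, it is the least one, hence join-irreducible.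
Conversely, for `t ≠ 1`, swapping two adjacent values that form an inversion of `t` gives `u ⋖ t`
whose code drops by one at a single position `p`, and `c(t) = b_{p, c_p(t)}(w) ⊔ c(u)`.
-/

open Finset Function

theorem Nat.exists_eq_of_le_of_succ_le_add_one {f : ℕ → ℕ} (h0 : f 0 = 0)
    (hstep : ∀ s, f (s + 1) ≤ f s + 1) {x N : ℕ} (hx : x ≤ f N) : ∃ s ≤ N, f s = x := by
  induction N with
  | zero => exact ⟨0, le_rfl, by omega⟩
  | succ N ih =>
    by_cases hxN : x ≤ f N
    · obtain ⟨s, hs, hfs⟩ := ih hxN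
      exact ⟨s, by omega, hfs⟩
    · exact ⟨N + 1, le_rfl, by have := hstep N; omega⟩

theorem Pi.eq_sup_update_of_le {ι β : Type*} [DecidableEq ι] [SemilatticeSup β] {f g : ι → β}
    {p : ι} {y : β} (hgf : g ≤ f) (hgp : g p = f p) (hy : y ≤ f p) : f = g ⊔ update f p y := by
  ext j
  rcases eq_or_ne j p with rfl | hj
  · simp [hgp, hy]
  · simp [hj, hgf j]

theorem Fin.swap_lt_swap_iff {n : ℕ} {a b x y : Fin n} (hab : (b : ℕ) = a + 1)
    (h₁ : ¬ (x = a ∧ y = b)) (h₂ : ¬ (x = b ∧ y = a)) :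
    Equiv.swap a b x < Equiv.swap a b y ↔ x < y := by
  simp only [Equiv.swap_apply_def, Fin.ext_iff, Fin.lt_def] at *
  split_ifs <;> omega

section

variable {n : ℕ}

@[simp]
theorem mem_Invs {w : Equiv.Perm (Fin n)} {p : Fin n × Fin n} :
    p ∈ Invs w ↔ p.1 < p.2 ∧ w p.2 < w p.1 := by
  simp [Invs]

theorem mext_eq_card (w : Equiv.Perm (Fin n)) (i : Fin n) (j : Fin (n + 1)) :
    mext w i j = #{d | i < d ∧ w d < w i ∧ (d : ℕ) < j} := by
  symm
  apply card_nbij' (i, ·) Prod.snd <;> intro p <;> aesop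

theorem mext_last (w : Equiv.Perm (Fin n)) (i : Fin n) : mext w i (Fin.last n) = lehmer w i := by
  simp [mext, lehmer]

theorem lehmer_eq_card (w : Equiv.Perm (Fin n)) (i : Fin n) :
    lehmer w i = #{d | i < d ∧ w d < w i} := by
  simp [← mext_last, mext_eq_card]

theorem mext_mono (w : Equiv.Perm (Fin n)) (i : Fin n) : Monotone (mext w i) :=
  fun _ _ hjk => card_le_card <| monotone_filter_right _ fun _ _ h => ⟨h.1, h.2.trans_le hjk⟩

theorem mext_castSucc_self (w : Equiv.Perm (Fin n)) (i : Fin n) : mext w i i.castSucc = 0 := by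
  simp only [mext_eq_card, Fin.val_castSucc, card_eq_zero, filter_eq_empty_iff]
  omega

theorem lehmer_one : lehmer (1 : Equiv.Perm (Fin n)) = 0 := by
  ext i
  simp only [lehmer_eq_card, Equiv.Perm.one_apply, Pi.zero_apply, card_eq_zero]
  exact filter_eq_empty_iff.2 fun _ _ h => lt_asymm h.1 h.2

theorem lehmer_le_lehmer {v w : Equiv.Perm (Fin n)} (h : leftWeak v w) (i : Fin n) :
    lehmer v i ≤ lehmer w i :=
  card_le_card (filter_subset_filter _ h)

theorem leftWeak.apply_lt_apply {v w : Equiv.Perm (Fin n)} (h : leftWeak v w) {i j : Fin n}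
    (hij : i < j) (hv : v j < v i) : w j < w i :=
  (mem_Invs.1 (h (mem_Invs (p := (i, j)) |>.2 ⟨hij, hv⟩))).2

theorem lehmer_le_lehmer_add_mext {v w : Equiv.Perm (Fin n)} (h : leftWeak v w) {i j : Fin n}
    (hij : i < j) (hw : w i < w j) : lehmer v i ≤ lehmer v j + mext w i j.castSucc := by
  have hv : v i < v j := (v.injective.ne hij.ne).lt_or_gt.resolve_right fun hji =>
    (h.apply_lt_apply hij hji).not_gt hw
  rw [lehmer_eq_card, lehmer_eq_card, mext_eq_card, add_comm]
  refine (card_le_card fun d hd => ?_).trans (card_union_le _ _)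
  simp only [mem_filter, mem_univ, true_and, mem_union, Fin.val_castSucc, ← Fin.lt_def] at hd ⊢
  rcases lt_trichotomy d j with hdj | rfl | hjd
  · exact .inl ⟨hd.1, h.apply_lt_apply hd.1 hd.2, hdj⟩
  · exact absurd hd.2 hv.not_gt
  · exact .inr ⟨hjd, hd.2.trans hv⟩

@[simp]
theorem bmin_apply_self (w : Equiv.Perm (Fin n)) (i : Fin n) (x : ℕ) : bmin w i x i = x := by
  simp [bmin, mext_castSucc_self]

theorem bmin_le_lehmer {v w : Equiv.Perm (Fin n)} (h : leftWeak v w) {i : Fin n} {x : ℕ}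
    (hx : x ≤ lehmer v i) : bmin w i x ≤ lehmer v := by
  intro j
  simp only [bmin]
  split_ifs with hj
  · rcases hj.1.eq_or_lt with hij | hij
    · obtain rfl : i = j := Fin.ext hij
      omega
    · have hw : w i < w j := hj.2.lt_of_ne (Fin.val_ne_of_ne (w.injective.ne (Fin.ne_of_lt hij)))
      have := lehmer_le_lehmer_add_mext h hij hw
      omega
  · exact Nat.zero_le _

theorem exists_adjacent_descent {t : Equiv.Perm (Fin n)} (ht : t ≠ 1) :
    ∃ a b : Fin n, (b : ℕ) = a + 1 ∧ t⁻¹ b < t⁻¹ a := by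
  by_contra! h
  apply ht
  cases n with
  | zero => exact Subsingleton.elim _ _
  | succ m =>
    have hmono : StrictMono ⇑t⁻¹ :=
      (Fin.monotone_iff_le_succ.2 fun a => h _ _ (by simp)).strictMono_of_injective
        t⁻¹.injective
    have hid : ⇑t⁻¹ = id := (hmono.range_inj strictMono_id).1 (by simp)
    rw [← inv_eq_one]
    exact Equiv.ext (congrFun hid)

theorem Invs_swap_mul {t : Equiv.Perm (Fin n)} {a b : Fin n} (hab : (b : ℕ) = a + 1)
    (hd : t⁻¹ b < t⁻¹ a) : Invs (Equiv.swap a b * t) = (Invs t).erase (t⁻¹ b, t⁻¹ a) := by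
  ext ⟨j, l⟩
  simp only [mem_Invs, mem_erase, Equiv.Perm.mul_apply, ne_eq, Prod.mk.injEq,
    Equiv.Perm.eq_inv_iff_eq]
  by_cases h₁ : t j = b ∧ t l = a
  · have hlt : a < b := by rw [Fin.lt_def]; omega
    simp [h₁, hlt.not_gt]
  by_cases h₂ : t j = a ∧ t l = b
  · have : l < j := by simpa [← h₂.1, ← h₂.2] using hd
    simp [this.not_gt]
  rw [Fin.swap_lt_swap_iff hab (by tauto) (by tauto)]
  tauto

theorem lehmer_eq_update_of_Invs_eq_erase {u t : Equiv.Perm (Fin n)} {p q : Fin n}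
    (h : Invs u = (Invs t).erase (p, q)) (hpq : (p, q) ∈ Invs t) :
    lehmer u = update (lehmer t) p (lehmer t p - 1) := by
  ext j
  rcases eq_or_ne j p with rfl | hj
  · have hpq' : (j, q) ∈ (Invs t).filter (·.1 = j) := mem_filter.2 ⟨hpq, rfl⟩
    rw [update_self, lehmer, lehmer, h, filter_erase, card_erase_of_mem hpq']
  · rw [update_of_ne hj, lehmer, lehmer, h, filter_erase, erase_eq_of_notMem]
    simp [Ne.symm hj]

theorem exists_lehmer_eq_update {t : Equiv.Perm (Fin n)} (ht : t ≠ 1) :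
    ∃ (u : Equiv.Perm (Fin n)) (p : Fin n), leftWeak u t ∧ 0 < lehmer t p ∧
      lehmer u = update (lehmer t) p (lehmer t p - 1) := by
  obtain ⟨a, b, hab, hd⟩ := exists_adjacent_descent ht
  have hmem : (t⁻¹ b, t⁻¹ a) ∈ Invs t := mem_Invs.2 ⟨hd, by simp [Fin.lt_def, hab]⟩
  have hInvs := Invs_swap_mul hab hd
  exact ⟨_, _, hInvs.trans_subset (erase_subset _ _), card_pos.2 ⟨_, mem_filter.2 ⟨hmem, rfl⟩⟩,
    lehmer_eq_update_of_Invs_eq_erase hInvs hmem⟩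

theorem exists_perm_lt_iff_lt {α : Type*} [LinearOrder α] {f : Fin n → α}
    (hf : Injective f) : ∃ v : Equiv.Perm (Fin n), ∀ j l, v j < v l ↔ f j < f l := by
  have hsort : StrictMono (f ∘ Tuple.sort f) :=
    (Tuple.monotone_sort f).strictMono_of_injective (hf.comp (Tuple.sort f).injective)
  refine ⟨(Tuple.sort f)⁻¹, fun j l => ?_⟩
  rw [← hsort.lt_iff_lt]
  simp

theorem exists_mext_eq (w : Equiv.Perm (Fin n)) (i : Fin n) {x : ℕ} (hx : x ≤ lehmer w i) :
    ∃ t : Fin (n + 1), mext w i t = x := by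
  set g : ℕ → ℕ := fun s => #{d | i < d ∧ w d < w i ∧ (d : ℕ) < s}
  have hg (t : Fin (n + 1)) : mext w i t = g t := mext_eq_card w i t
  have hstep (s : ℕ) : g (s + 1) ≤ g s + 1 :=
    calc g (s + 1)
        ≤ #(univ.filter (fun d => i < d ∧ w d < w i ∧ (d : ℕ) < s) ∪
            univ.filter fun d : Fin n => (d : ℕ) = s) :=
          card_le_card fun d hd => by
            simp only [mem_filter, mem_univ, true_and, mem_union] at hd ⊢
            omega
      _ ≤ g s + #{d : Fin n | (d : ℕ) = s} := card_union_le _ _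
      _ ≤ g s + 1 := by
          gcongr
          exact card_le_one.2 fun a ha b hb => Fin.ext (by simp only [mem_filter] at ha hb; omega)
  have hn : x ≤ g n := by rwa [← Fin.val_last n, ← hg, mext_last]
  obtain ⟨s, hs, hgs⟩ := Nat.exists_eq_of_le_of_succ_le_add_one (by simp [g]) hstep hn
  exact ⟨⟨s, by omega⟩, (hg _).trans hgs⟩

theorem mext_eq_mext_add_card {w : Equiv.Perm (Fin n)} {i j : Fin n} {t : Fin (n + 1)}
    (hij : i ≤ j) (hw : w i ≤ w j) (hjt : (j : ℕ) < t) :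
    mext w i t = mext w i j.castSucc + #{l | j < l ∧ (l : ℕ) < t ∧ w l < w i} := by
  rw [mext_eq_card, mext_eq_card, ← card_union_of_disjoint]
  · congr 1
    ext d
    simp only [mem_filter, mem_univ, true_and, mem_union, Fin.val_castSucc]
    rcases lt_trichotomy d j with hdj | rfl | hjd <;> omega
  · exact disjoint_filter.2 fun d _ h₁ h₂ => by simp only [Fin.val_castSucc] at h₁; omega

theorem bmin_mem_codeSet {w : Equiv.Perm (Fin n)} {i : Fin n} {x : ℕ} (hx : x ≤ lehmer w i) :
    bmin w i x ∈ codeSet w := by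
  obtain ⟨t, ht⟩ := exists_mext_eq w i hx
  -- `v` moves the positions `j ∈ [i, t)` with `w i ≤ w j` behind the positions `l < t` with
  -- `w l < w i` and keeps every other relative order.
  set E : Fin n → Prop := fun j => i ≤ j ∧ (j : ℕ) < t ∧ w i ≤ w j
  set key : Fin n → ℕ := fun j => if E j then j + n else if (t : ℕ) ≤ j then j + 2 * n else j
  have hkey : Injective key := by
    intro j l h
    simp only [key] at h
    split_ifs at h <;> omega
  obtain ⟨v, hv⟩ := exists_perm_lt_iff_lt hkey
  have hinv (j l : Fin n) (hjl : j < l) : v l < v j ↔ E j ∧ (l : ℕ) < t ∧ w l < w i := by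
    rw [hv]
    simp only [key, E]
    split_ifs <;> omega
  refine ⟨v, fun p hp => ?_, ?_⟩
  · obtain ⟨hpl, hpv⟩ := mem_Invs.1 hp
    obtain ⟨⟨-, -, hE⟩, -, hl⟩ := (hinv _ _ hpl).1 hpv
    exact mem_Invs.2 ⟨hpl, hl.trans_le hE⟩
  ext j
  rw [lehmer_eq_card, bmin]
  by_cases hE : E j
  · have hcount : #{l | j < l ∧ v l < v j} = #{l | j < l ∧ (l : ℕ) < t ∧ w l < w i} :=
      congrArg card <| filter_congr fun l _ =>
        and_congr_right fun hjl => (hinv j l hjl).trans (and_iff_right hE)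
    have := mext_eq_mext_add_card hE.1 hE.2.2 hE.2.1
    rw [hcount, if_pos ⟨hE.1, hE.2.2⟩]
    omega
  · have hzero : #{l | j < l ∧ v l < v j} = 0 :=
      card_eq_zero.2 <| filter_eq_empty_iff.2 fun l _ h => hE ((hinv j l h.1).1 h.2).1
    rw [hzero]
    split_ifs with hj
    · have htj : t ≤ j.castSucc := Fin.le_def.2 (not_lt.1 fun hjt => hE ⟨hj.1, hjt, hj.2⟩)
      have := mext_mono w i htj
      omega
    · rfl

end

/-- Proposition 4.7: the join-irreducible elements of `(c(Λ_w), ≤)` (nonzero elements `z`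
such that `z = x ⊔ y` with `x, y ∈ c(Λ_w)` forces `z = x` or `z = y`) are exactly the
elements of `M_w = {b_{i,x}(w) : i ∈ [n], 1 ≤ x ≤ c_i(w)}`. -/
theorem joinIrreducibles_eq_Mset {n : ℕ} (w : Equiv.Perm (Fin n)) (z : Fin n → ℕ) :
    (z ∈ codeSet w ∧ z ≠ 0 ∧
      ∀ x ∈ codeSet w, ∀ y ∈ codeSet w, z = x ⊔ y → z = x ∨ z = y) ↔
    z ∈ Mset w := by
  constructor
  · rintro ⟨⟨t, htw, rfl⟩, hz, hirr⟩
    have ht : t ≠ 1 := by rintro rfl; exact hz lehmer_one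
    obtain ⟨u, p, hut, hp, hu⟩ := exists_lehmer_eq_update ht
    have hb : bmin w p (lehmer t p) ∈ codeSet w := bmin_mem_codeSet (lehmer_le_lehmer htw p)
    have hjoin : lehmer t = bmin w p (lehmer t p) ⊔ lehmer u :=
      hu ▸ Pi.eq_sup_update_of_le (bmin_le_lehmer htw le_rfl) (bmin_apply_self w p _)
        (Nat.sub_le _ _)
    rcases hirr _ hb _ ⟨u, hut.trans htw, rfl⟩ hjoin with h | h
    · exact ⟨p, _, hp, lehmer_le_lehmer htw p, h⟩
    · have := congrFun h p
      simp only [hu, update_self] at this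
      omega
  · rintro ⟨i, x, hx, hxw, rfl⟩
    have hz : bmin w i x ≠ 0 := fun h => Nat.one_le_iff_ne_zero.1 hx (by simpa using congrFun h i)
    refine ⟨bmin_mem_codeSet hxw, hz, ?_⟩
    rintro _ ⟨a, ha, rfl⟩ _ ⟨b, hb, rfl⟩ hab
    have hi : x = max (lehmer a i) (lehmer b i) := by simpa using congrFun hab i
    rcases le_total (lehmer b i) (lehmer a i) with hle | hle
    · exact .inl <| (bmin_le_lehmer ha (by omega)).antisymm (hab ▸ le_sup_left)
    · exact .inr <| (bmin_le_lehmer hb (by omega)).antisymm (hab ▸ le_sup_right)
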